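/- For every finite player set N, every embedded coalition (T,τ) of N, and every coalition S ⊆ N, the restriction of the scaled Dirac game δ_{T,τ} by removing the players of S satisfies: (δ_{T,τ})_{−S} = δ_{T,τ_{−S}} if S ∩ T = ∅, and (δ_{T,τ})_{−S} is the null game on N\S otherwise. -/

import Mathlib

open Finset BigOperators

namespace TUX

/-- A (raw) game in partition function form: assigns a real worth to each
coalition together with a partition (of the outside players). -/
abbrev Game := Finset ℕ → Finset (Finset ℕ) → ℝ

/-- A TU game (characteristic function). -/
abbrev TUGame := Finset ℕ → ℝ

/-- A solution for TUX games: given a player set and a game, assigns payoffs. -/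
abbrev Sol := Finset ℕ → Game → ℕ → ℝ

/-- `w` is a genuine TUX game: the empty coalition has worth 0. -/
def IsTUX (w : Game) : Prop := ∀ π, w ∅ π = 0

/-- `π` is a partition of the finite set `M`. -/
def IsPartition (M : Finset ℕ) (π : Finset (Finset ℕ)) : Prop :=
  (∀ B ∈ π, B ⊆ M) ∧ ∅ ∉ π ∧ ∀ x ∈ M, (π.filter (fun B => x ∈ B)).card = 1

instance (M : Finset ℕ) : DecidablePred (IsPartition M) := fun π => by
  unfold IsPartition; infer_instance

/-- The finite set of all partitions of `M`. -/
def partitionsOf (M : Finset ℕ) : Finset (Finset (Finset ℕ)) :=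
  (M.powerset.powerset).filter (IsPartition M)

/-- The Ewens(θ = 1) probability of the partition `π` of `M`:
`p*_M(π) = ∏_{B ∈ π} (|B| - 1)! / |M|!`. -/
noncomputable def pstar (M : Finset ℕ) (π : Finset (Finset ℕ)) : ℝ :=
  (∏ B ∈ π, ((B.card - 1).factorial : ℝ)) / (M.card.factorial : ℝ)

/-- The block of `π` containing `j` (junk if `π` is not a partition containing `j`). -/
def blockOf (π : Finset (Finset ℕ)) (j : ℕ) : Finset ℕ :=
  (π.filter (fun B => j ∈ B)).sup id

/-- Add player `i` to the block `B` of `π`. -/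
def addToBlock (π : Finset (Finset ℕ)) (i : ℕ) (B : Finset ℕ) : Finset (Finset ℕ) :=
  insert (insert i B) (π.erase B)

/-- The restriction operator `r⋆` removing a single player `i` from a game on `N`:
`w₋ᵢ(S,π) = (1/(n-s)) (w(S, π₊ᵢ⇝∅) + ∑_{j ∈ N∖(S∪{i})} w(S, π₊ᵢ⇝π(j)))`. -/
noncomputable def restrict1 (N : Finset ℕ) (w : Game) (i : ℕ) : Game :=
  fun S π =>
    ((N.card : ℝ) - (S.card : ℝ))⁻¹ *
      (w S (insert {i} π) + ∑ j ∈ (N \ S).erase i, w S (addToBlock π i (blockOf π j)))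

/-- Iterated removal of a list of players. -/
noncomputable def restrictL : Finset ℕ → Game → List ℕ → Game
  | _, w, [] => w
  | N, w, i :: l => restrictL (N.erase i) (restrict1 N w i) l

/-- Removal of a set of players (via the increasing enumeration; by path
independence of `r⋆` the order is immaterial). -/
noncomputable def restrictSet (N : Finset ℕ) (w : Game) (T : Finset ℕ) : Game :=
  restrictL N w (T.sort (· ≤ ·))

/-- The average TU game `v̄_w` of a TUX game `w` on `N`. -/
noncomputable def avg (N : Finset ℕ) (w : Game) : TUGame :=
  fun S => ∑ π ∈ partitionsOf (N \ S), pstar (N \ S) π * w S π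

/-- The auxiliary TU game `v*_w(S) = w₋(N∖S)(S,∅)`. -/
noncomputable def auxGame (N : Finset ℕ) (w : Game) : TUGame :=
  fun S => restrictSet N w (N \ S) S ∅

/-- The Shapley value of a TU game on player set `N`. -/
noncomputable def shapley (N : Finset ℕ) (v : TUGame) (i : ℕ) : ℝ :=
  ∑ S ∈ (N.erase i).powerset,
    (((S.card.factorial : ℝ) * ((N.card - S.card - 1).factorial : ℝ)) / (N.card.factorial : ℝ)) *
      (v (insert i S) - v S)

/-- The MPW solution: the Shapley value of the average game. -/
noncomputable def MPW (N : Finset ℕ) (w : Game) (i : ℕ) : ℝ := shapley N (avg N w) i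

/-- The MPW solution as a solution for TUX games. -/
noncomputable def MPWsol : Sol := fun N w i => MPW N w i

/-- The scaled Dirac TUX game `δ_{T,τ}` on `N`. -/
noncomputable def scaledDirac (N T : Finset ℕ) (τ : Finset (Finset ℕ)) : Game :=
  fun S π => if S = T ∧ π = τ then (pstar (N \ T) τ)⁻¹ else 0

/-- `τ₋S`: remove the players of `S` from each block of `τ`, discarding empty blocks. -/
def partRemove (τ : Finset (Finset ℕ)) (S : Finset ℕ) : Finset (Finset ℕ) :=
  (τ.image (fun B => B \ S)).erase ∅

/-- The Sobolev-reduced TUX game `w₋ⱼ^{So,φ}` on `N ∖ {j}`. -/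
noncomputable def sobRed (N : Finset ℕ) (φ : Sol) (w : Game) (j : ℕ) : Game :=
  fun S π =>
    ((S.card : ℝ) / ((N.card : ℝ) - 1)) * (w (insert j S) π - φ N w j) +
      (1 - (S.card : ℝ) / ((N.card : ℝ) - 1)) * restrict1 N w j S π

/-- The Hart–Mas-Colell reduced TUX game `w₋T^{HM,φ}` on `N ∖ T`. -/
noncomputable def hmRed (N : Finset ℕ) (φ : Sol) (w : Game) (T : Finset ℕ) : Game :=
  fun S π => w (S ∪ T) π - ∑ j ∈ T, φ (S ∪ T) (restrictSet N w (N \ (S ∪ T))) j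

/-- Efficiency for TUX games. -/
def EfficientX (φ : Sol) : Prop :=
  ∀ (N : Finset ℕ) (w : Game), IsTUX w → ∑ i ∈ N, φ N w i = w N ∅

/-- Balanced contributions for TUX games (w.r.t. the restriction operator `r⋆`). -/
def BalancedContributionsX (φ : Sol) : Prop :=
  ∀ (N : Finset ℕ) (w : Game), IsTUX w → ∀ i ∈ N, ∀ j ∈ N,
    φ N w i - φ (N.erase j) (restrict1 N w j) i
      = φ N w j - φ (N.erase i) (restrict1 N w i) j

/-- 2-standardness for TUX games. -/
def TwoStandardX (φ : Sol) : Prop :=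
  ∀ i j : ℕ, i ≠ j → ∀ w : Game, IsTUX w →
    φ {i, j} w i
      = w {i} {({j} : Finset ℕ)}
        + (w {i, j} ∅ - w {j} {({i} : Finset ℕ)} - w {i} {({j} : Finset ℕ)}) / 2

/-- Sobolev consistency for TUX games. -/
def SobolevConsistentX (φ : Sol) : Prop :=
  ∀ (N : Finset ℕ) (w : Game), IsTUX w → ∀ i ∈ N, ∀ j ∈ N, i ≠ j →
    φ N w i = φ (N.erase j) (sobRed N φ w j) i

/-- Hart–Mas-Colell consistency (single-player removal) for TUX games. -/
def HMConsistentX (φ : Sol) : Prop :=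
  ∀ (N : Finset ℕ) (w : Game), IsTUX w → ∀ i ∈ N, ∀ j ∈ N, i ≠ j →
    φ N w i = φ (N.erase j) (hmRed N φ w {j}) i

/-- Set Hart–Mas-Colell consistency (removal of a coalition) for TUX games. -/
def SetHMConsistentX (φ : Sol) : Prop :=
  ∀ (N : Finset ℕ) (w : Game), IsTUX w → ∀ i ∈ N, ∀ T ⊆ N.erase i,
    φ N w i = φ (N \ T) (hmRed N φ w T) i

/-- The finite set of embedded coalitions `(T,τ)` of `N` with `T ≠ ∅`. -/
def embeddedNE (N : Finset ℕ) : Finset (Finset ℕ × Finset (Finset ℕ)) :=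
  (N.powerset ×ˢ N.powerset.powerset).filter
    (fun p => p.1.Nonempty ∧ IsPartition (N \ p.1) p.2)

end TUX

/-!
Let `i ∉ T` and let `π` be a partition of `(N \ T) \ {i}`. Putting `i` into a block `B` of `π`,
or into a new singleton block, yields `τ` exactly when `π = τ₋ᵢ` and `B = τ(i) \ {i}`; hence
`(δ_{T,τ})₋ᵢ` is supported on `(T, τ₋ᵢ)`, where `r⋆` counts `max 1 (|τ(i)| - 1)` hits. This count
is precisely the ratio `(n - t) p*(τ) / p*(τ₋ᵢ)` of Ewens weights, so `(δ_{T,τ})₋ᵢ = δ_{T,τ₋ᵢ}`.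
If `i ∈ T`, no coalition of `N \ {i}` equals `T`, and the restriction vanishes. Removing the
players of `S` one at a time, with `(τ₋ᵢ)₋ⱼ = τ₋{i,j}`, gives the theorem.
-/

namespace TUX

open Finset Nat

namespace IsPartition

variable {M : Finset ℕ} {π : Finset (Finset ℕ)} {x : ℕ}

lemma filter_mem_eq_singleton_blockOf (h : IsPartition M π) (hx : x ∈ M) :
    π.filter (fun B => x ∈ B) = {blockOf π x} := by
  obtain ⟨B, hB⟩ := card_eq_one.mp (h.2.2 x hx)
  simp [blockOf, hB]

lemma blockOf_mem_filter (h : IsPartition M π) (hx : x ∈ M) :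
    blockOf π x ∈ π.filter (fun B => x ∈ B) := by
  rw [h.filter_mem_eq_singleton_blockOf hx]
  exact mem_singleton_self _

lemma blockOf_mem (h : IsPartition M π) (hx : x ∈ M) : blockOf π x ∈ π :=
  (mem_filter.mp (h.blockOf_mem_filter hx)).1

lemma mem_blockOf (h : IsPartition M π) (hx : x ∈ M) : x ∈ blockOf π x :=
  (mem_filter.mp (h.blockOf_mem_filter hx)).2

lemma blockOf_eq_of_mem (h : IsPartition M π) {B : Finset ℕ} (hB : B ∈ π) (hx : x ∈ B) :
    blockOf π x = B := by
  have hBx : B ∈ π.filter (fun B => x ∈ B) := mem_filter.mpr ⟨hB, hx⟩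
  rw [h.filter_mem_eq_singleton_blockOf (h.1 B hB hx), mem_singleton] at hBx
  exact hBx.symm

lemma partRemove (h : IsPartition M π) (S : Finset ℕ) :
    IsPartition (M \ S) (TUX.partRemove π S) := by
  refine ⟨?_, by simp [TUX.partRemove], fun x hx => card_eq_one.mpr ⟨blockOf π x \ S, ?_⟩⟩
  · intro B hB
    obtain ⟨D, hD, rfl⟩ := mem_image.mp (mem_of_mem_erase hB)
    exact sdiff_subset_sdiff (h.1 D hD) Subset.rfl
  · obtain ⟨hxM, hxS⟩ := mem_sdiff.mp hx
    have hxB : x ∈ blockOf π x \ S := mem_sdiff.mpr ⟨h.mem_blockOf hxM, hxS⟩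
    ext C
    simp only [mem_filter, mem_singleton, TUX.partRemove, mem_erase, mem_image]
    constructor
    · rintro ⟨⟨-, D, hD, rfl⟩, hxD⟩
      rw [h.blockOf_eq_of_mem hD (mem_sdiff.mp hxD).1]
    · rintro rfl
      exact ⟨⟨ne_empty_of_mem hxB, blockOf π x, h.blockOf_mem hxM, rfl⟩, hxB⟩

end IsPartition

lemma partRemove_empty {τ : Finset (Finset ℕ)} (h : ∅ ∉ τ) : partRemove τ ∅ = τ := by
  simp [partRemove, erase_eq_of_notMem h]

lemma partRemove_partRemove (τ : Finset (Finset ℕ)) (A B : Finset ℕ) :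
    partRemove (partRemove τ A) B = partRemove τ (A ∪ B) := by
  have hsdiff (E : Finset ℕ) : (E \ A) \ B = E \ (A ∪ B) := sdiff_sdiff_left
  ext C
  simp only [partRemove, mem_erase, mem_image]
  constructor
  · rintro ⟨hC, D, ⟨-, E, hE, rfl⟩, rfl⟩
    exact ⟨hC, E, hE, (hsdiff E).symm⟩
  · rintro ⟨hC, E, hE, rfl⟩
    refine ⟨hC, E \ A, ⟨fun h0 => hC ?_, E, hE, rfl⟩, hsdiff E⟩
    rw [← hsdiff, h0, empty_sdiff]

section SinglePlayer

variable {M : Finset ℕ} {π τ : Finset (Finset ℕ)} {i : ℕ} {B : Finset ℕ}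

lemma addToBlock_empty (h : ∅ ∉ π) : addToBlock π i ∅ = insert {i} π := by
  rw [addToBlock, insert_empty, erase_eq_of_notMem h]

/-- Allowing `B = ∅` covers the new singleton block `{i}` (see `addToBlock_empty`). -/
lemma subset_erase_of_mem_insert_empty (h : IsPartition (M.erase i) π) (hB : B ∈ insert ∅ π) :
    B ⊆ M.erase i := by
  rcases mem_insert.mp hB with rfl | hB
  exacts [empty_subset _, h.1 B hB]

lemma isPartition_addToBlock (h : IsPartition (M.erase i) π) (hi : i ∈ M)
    (hB : B ∈ insert ∅ π) : IsPartition M (addToBlock π i B) := by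
  have hBM := subset_erase_of_mem_insert_empty h hB
  refine ⟨?_, ?_, ?_⟩
  · intro D hD
    rcases mem_insert.mp hD with rfl | hD
    · exact insert_subset hi (hBM.trans (erase_subset _ _))
    · exact (h.1 D (mem_of_mem_erase hD)).trans (erase_subset _ _)
  · rw [addToBlock, mem_insert, not_or]
    exact ⟨(insert_ne_empty i B).symm, fun h0 => h.2.1 (mem_of_mem_erase h0)⟩
  · intro x hx
    rw [addToBlock, filter_insert, filter_erase]
    by_cases hxi : x = i
    · subst hxi
      have hnone : π.filter (fun D => x ∈ D) = ∅ :=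
        filter_eq_empty_iff.mpr fun D hD hxD => notMem_erase x M (h.1 D hD hxD)
      simp [hnone]
    have hx' : x ∈ M.erase i := mem_erase.mpr ⟨hxi, hx⟩
    rw [h.filter_mem_eq_singleton_blockOf hx']
    by_cases hxB : x ∈ B
    · have hBπ : B ∈ π := (mem_insert.mp hB).resolve_left (ne_empty_of_mem hxB)
      simp [h.blockOf_eq_of_mem hBπ hxB, hxB]
    · have hne : blockOf π x ≠ B := fun he => hxB (he ▸ h.mem_blockOf hx')
      simp [hxB, hxi, hne.symm]

lemma blockOf_addToBlock (h : IsPartition (M.erase i) π) (hi : i ∈ M) (hB : B ∈ insert ∅ π) :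
    blockOf (addToBlock π i B) i = insert i B :=
  (isPartition_addToBlock h hi hB).blockOf_eq_of_mem (mem_insert_self _ _) (mem_insert_self _ _)

lemma erase_blockOf_notMem (hτ : IsPartition M τ) (hi : i ∈ M) :
    (blockOf τ i).erase i ∉ τ.erase (blockOf τ i) := by
  intro hD
  obtain ⟨hne, hD⟩ := mem_erase.mp hD
  obtain ⟨j, hj⟩ := nonempty_iff_ne_empty.mpr fun h0 => hτ.2.1 (h0 ▸ hD)
  exact hne ((hτ.blockOf_eq_of_mem hD hj).symm.trans
    (hτ.blockOf_eq_of_mem (hτ.blockOf_mem hi) (mem_of_mem_erase hj)))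

lemma partRemove_singleton (hτ : IsPartition M τ) (hi : i ∈ M) :
    partRemove τ {i} = (insert ((blockOf τ i).erase i) (τ.erase (blockOf τ i))).erase ∅ := by
  have hiD : ∀ D ∈ τ.erase (blockOf τ i), D \ {i} = id D := fun D hD =>
    (sdiff_singleton_eq_erase i D).trans <| erase_eq_of_notMem fun hiD =>
      (ne_of_mem_erase hD) (hτ.blockOf_eq_of_mem (mem_of_mem_erase hD) hiD).symm
  calc partRemove τ {i}
      = ((insert (blockOf τ i) (τ.erase (blockOf τ i))).image (· \ {i})).erase ∅ := by
        rw [insert_erase (hτ.blockOf_mem hi), partRemove]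
    _ = _ := by rw [image_insert, sdiff_singleton_eq_erase, image_congr hiD, image_id]

lemma addToBlock_partRemove (hτ : IsPartition M τ) (hi : i ∈ M) :
    addToBlock (partRemove τ {i}) i ((blockOf τ i).erase i) = τ := by
  rw [addToBlock, partRemove_singleton hτ hi, insert_erase (hτ.mem_blockOf hi), erase_right_comm,
    erase_insert (erase_blockOf_notMem hτ hi),
    erase_eq_of_notMem fun h0 => hτ.2.1 (mem_of_mem_erase h0), insert_erase (hτ.blockOf_mem hi)]

lemma partRemove_addToBlock (h : IsPartition (M.erase i) π) (hB : B ∈ insert ∅ π) :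
    partRemove (addToBlock π i B) {i} = π := by
  have hiB : i ∉ B := fun hiB => notMem_erase i M (subset_erase_of_mem_insert_empty h hB hiB)
  rw [partRemove, addToBlock, image_insert, insert_sdiff_of_mem _ (mem_singleton_self i),
    sdiff_singleton_eq_erase, erase_eq_of_notMem hiB, image_congr (g := id), image_id]
  · rcases mem_insert.mp hB with rfl | hB
    · rw [erase_insert_eq_erase, erase_eq_of_notMem h.2.1, erase_eq_of_notMem h.2.1]
    · rw [insert_erase hB, erase_eq_of_notMem h.2.1]
  · intro D hD
    exact (sdiff_singleton_eq_erase i D).trans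
      (erase_eq_of_notMem fun hiD => notMem_erase i M (h.1 D (mem_of_mem_erase hD) hiD))

lemma addToBlock_eq_iff (hτ : IsPartition M τ) (hi : i ∈ M) (hπ : IsPartition (M.erase i) π)
    (hB : B ∈ insert ∅ π) :
    addToBlock π i B = τ ↔ π = partRemove τ {i} ∧ B = (blockOf τ i).erase i := by
  constructor
  · rintro rfl
    have hiB : i ∉ B := fun hiB => notMem_erase i M (subset_erase_of_mem_insert_empty hπ hB hiB)
    rw [partRemove_addToBlock hπ hB, blockOf_addToBlock hπ hi hB, erase_insert hiB]
    exact ⟨rfl, rfl⟩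
  · rintro ⟨rfl, rfl⟩
    exact addToBlock_partRemove hτ hi

lemma filter_blockOf_partRemove_eq (hτ : IsPartition M τ) (hi : i ∈ M) :
    (M.erase i).filter (fun j => blockOf (partRemove τ {i}) j = (blockOf τ i).erase i)
      = (blockOf τ i).erase i := by
  have hπ : IsPartition (M.erase i) (partRemove τ {i}) := by
    rw [← sdiff_singleton_eq_erase]
    exact hτ.partRemove {i}
  ext j
  rw [mem_filter]
  constructor
  · rintro ⟨hj, he⟩
    exact he ▸ hπ.mem_blockOf hj
  · intro hj
    have hmem : (blockOf τ i).erase i ∈ partRemove τ {i} := by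
      rw [partRemove_singleton hτ hi]
      exact mem_erase.mpr ⟨ne_empty_of_mem hj, mem_insert_self _ _⟩
    exact ⟨erase_subset_erase i (hτ.1 _ (hτ.blockOf_mem hi)) hj, hπ.blockOf_eq_of_mem hmem hj⟩

lemma max_one_mul_prod_partRemove_singleton (hτ : IsPartition M τ) (hi : i ∈ M) :
    max 1 #((blockOf τ i).erase i) * ∏ B ∈ partRemove τ {i}, (#B - 1)!
      = ∏ B ∈ τ, (#B - 1)! := by
  rw [partRemove_singleton hτ hi, ← mul_prod_erase τ _ (hτ.blockOf_mem hi),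
    ← card_erase_of_mem (hτ.mem_blockOf hi)]
  set C := blockOf τ i
  have hempty : ∅ ∉ τ.erase C := fun h0 => hτ.2.1 (mem_of_mem_erase h0)
  by_cases h0 : C.erase i = ∅
  · rw [h0, erase_insert_eq_erase, erase_eq_of_notMem hempty]
    simp
  · have hpos : 0 < #(C.erase i) := card_pos.mpr (nonempty_iff_ne_empty.mpr h0)
    have hnotMem : ∅ ∉ insert (C.erase i) (τ.erase C) := by
      simpa [Ne.symm h0] using hempty
    rw [erase_eq_of_notMem hnotMem, prod_insert (erase_blockOf_notMem hτ hi),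
      max_eq_right hpos, ← mul_assoc, Nat.mul_factorial_pred hpos.ne']

lemma card_mul_pstar (hτ : IsPartition M τ) (hi : i ∈ M) :
    (#M : ℝ) * pstar M τ
      = max 1 #((blockOf τ i).erase i) * pstar (M.erase i) (partRemove τ {i}) := by
  have hprod := congrArg (Nat.cast (R := ℝ)) (max_one_mul_prod_partRemove_singleton hτ hi)
  have hM : (#M : ℝ) ≠ 0 := Nat.cast_ne_zero.mpr (card_ne_zero.mpr ⟨i, hi⟩)
  have hfact : (#M : ℝ) * (#M - 1 : ℕ)! = (#M)! := by
    exact_mod_cast Nat.mul_factorial_pred (card_ne_zero.mpr ⟨i, hi⟩)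
  push_cast at hprod ⊢
  rw [pstar, pstar, card_erase_of_mem hi, ← hprod, ← hfact]
  field_simp

end SinglePlayer

/-- `r⋆` only reads a game on embedded coalitions, so games are compared there. -/
def EqOnEmbedded (N : Finset ℕ) (w w' : Game) : Prop :=
  ∀ R ⊆ N, ∀ ρ, IsPartition (N \ R) ρ → w R ρ = w' R ρ

namespace EqOnEmbedded

variable {N : Finset ℕ} {w w' w'' : Game}

lemma trans (h : EqOnEmbedded N w w') (h' : EqOnEmbedded N w' w'') : EqOnEmbedded N w w'' :=
  fun R hR ρ hρ => (h R hR ρ hρ).trans (h' R hR ρ hρ)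

lemma restrict1 (h : EqOnEmbedded N w w') {i : ℕ} (hi : i ∈ N) :
    EqOnEmbedded (N.erase i) (restrict1 N w i) (restrict1 N w' i) := by
  intro R hR ρ hρ
  have hRN : R ⊆ N := hR.trans (erase_subset i N)
  have hiR : i ∈ N \ R := mem_sdiff.mpr ⟨hi, fun hiR => notMem_erase i N (hR hiR)⟩
  rw [erase_sdiff_comm] at hρ
  have hsingle : IsPartition (N \ R) (insert {i} ρ) := by
    rw [← addToBlock_empty hρ.2.1]
    exact isPartition_addToBlock hρ hiR (mem_insert_self _ _)
  have hblock (j : ℕ) (hj : j ∈ (N \ R).erase i) :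
      IsPartition (N \ R) (addToBlock ρ i (blockOf ρ j)) :=
    isPartition_addToBlock hρ hiR (mem_insert_of_mem (hρ.blockOf_mem hj))
  simp only [TUX.restrict1]
  rw [h R hRN _ hsingle, sum_congr rfl fun j hj => h R hRN _ (hblock j hj)]

lemma restrictL (l : List ℕ) (h : EqOnEmbedded N w w') (hl : l.Nodup) (hlN : l.toFinset ⊆ N) :
    EqOnEmbedded (N \ l.toFinset) (restrictL N w l) (restrictL N w' l) := by
  induction l generalizing N w w' with
  | nil => simpa [TUX.restrictL] using h
  | cons i l ih =>
    obtain ⟨hil, hl⟩ := List.nodup_cons.mp hl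
    rw [List.toFinset_cons, insert_subset_iff] at hlN
    rw [List.toFinset_cons, sdiff_insert, ← erase_sdiff_comm]
    exact ih (h.restrict1 hlN.1) hl (subset_erase.mpr ⟨hlN.2, List.mem_toFinset.not.mpr hil⟩)

end EqOnEmbedded

lemma pstar_pos (M : Finset ℕ) (τ : Finset (Finset ℕ)) : 0 < pstar M τ := by
  unfold pstar
  positivity

lemma restrict1_zero (N : Finset ℕ) (i : ℕ) : restrict1 N 0 i = 0 := by
  funext S π
  simp [restrict1]

lemma restrictL_zero (N : Finset ℕ) (l : List ℕ) : restrictL N 0 l = 0 := by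
  induction l generalizing N with
  | nil => rfl
  | cons i l ih => simp only [restrictL, restrict1_zero, ih]

section ScaledDirac

variable {N T : Finset ℕ} {τ : Finset (Finset ℕ)} {i : ℕ}

lemma restrict1_scaledDirac_of_mem (hiT : i ∈ T) :
    EqOnEmbedded (N.erase i) (restrict1 N (scaledDirac N T τ) i) 0 := by
  intro R hR ρ _
  have hRT : R ≠ T := fun he => notMem_erase i N (hR (he ▸ hiT))
  simp [restrict1, scaledDirac, hRT]

lemma restrict1_scaledDirac_self (hT : T ⊆ N) (hτ : IsPartition (N \ T) τ) (hiN : i ∈ N)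
    (hiT : i ∉ T) {π : Finset (Finset ℕ)} (hπ : IsPartition ((N \ T).erase i) π) :
    restrict1 N (scaledDirac N T τ) i T π =
      if π = partRemove τ {i} then
        (#(N \ T) : ℝ)⁻¹ * (max 1 #((blockOf τ i).erase i) * (pstar (N \ T) τ)⁻¹)
      else 0 := by
  have hiM : i ∈ N \ T := mem_sdiff.mpr ⟨hiN, hiT⟩
  have hcard : (#N : ℝ) - #T = #(N \ T) := by
    rw [card_sdiff_of_subset hT, Nat.cast_sub (card_le_card hT)]
  have hterm (B : Finset ℕ) (hB : B ∈ insert ∅ π) :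
      scaledDirac N T τ T (addToBlock π i B) =
        if π = partRemove τ {i} ∧ B = (blockOf τ i).erase i then (pstar (N \ T) τ)⁻¹ else 0 := by
    simp only [scaledDirac, true_and, addToBlock_eq_iff hτ hiM hπ hB]
  simp only [restrict1]
  rw [← addToBlock_empty hπ.2.1, hterm _ (mem_insert_self _ _),
    sum_congr rfl fun j hj => hterm _ (mem_insert_of_mem (hπ.blockOf_mem hj)), hcard]
  by_cases hπτ : π = partRemove τ {i}
  swap
  · simp [hπτ]
  subst hπτ
  simp only [true_and, if_true]
  rw [← sum_filter, filter_blockOf_partRemove_eq hτ hiM, sum_const, nsmul_eq_mul]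
  by_cases h0 : (blockOf τ i).erase i = ∅
  · simp [h0]
  · simp [Ne.symm h0, nonempty_iff_ne_empty.mpr h0]

lemma restrict1_scaledDirac_of_notMem (hT : T ⊆ N) (hτ : IsPartition (N \ T) τ) (hiN : i ∈ N)
    (hiT : i ∉ T) :
    EqOnEmbedded (N.erase i) (restrict1 N (scaledDirac N T τ) i)
      (scaledDirac (N.erase i) T (partRemove τ {i})) := by
  intro R _ π hπ
  by_cases hRT : R = T
  swap
  · simp [restrict1, scaledDirac, hRT]
  subst hRT
  rw [erase_sdiff_comm] at hπ
  rw [restrict1_scaledDirac_self hT hτ hiN hiT hπ]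
  simp only [scaledDirac, true_and, erase_sdiff_comm]
  split_ifs
  · have hiM : i ∈ N \ R := mem_sdiff.mpr ⟨hiN, hiT⟩
    have hM : (#(N \ R) : ℝ) ≠ 0 := Nat.cast_ne_zero.mpr (card_ne_zero.mpr ⟨i, hiM⟩)
    have hp := (pstar_pos (N \ R) τ).ne'
    have key := card_mul_pstar hτ hiM
    apply eq_inv_of_mul_eq_one_left
    field_simp
    linarith
  · rfl

lemma restrictL_scaledDirac (l : List ℕ) (hl : l.Nodup) (hlN : l.toFinset ⊆ N) (hT : T ⊆ N)
    (hτ : IsPartition (N \ T) τ) :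
    EqOnEmbedded (N \ l.toFinset) (restrictL N (scaledDirac N T τ) l)
      (if l.toFinset ∩ T = ∅ then scaledDirac (N \ l.toFinset) T (partRemove τ l.toFinset)
        else 0) := by
  induction l generalizing N τ with
  | nil =>
    rw [List.toFinset_nil, sdiff_empty, empty_inter, if_pos rfl, partRemove_empty hτ.2.1]
    exact fun _ _ _ _ => rfl
  | cons i l ih =>
    obtain ⟨hil, hl⟩ := List.nodup_cons.mp hl
    rw [List.toFinset_cons, insert_subset_iff] at hlN
    have hlN' : l.toFinset ⊆ N.erase i :=
      subset_erase.mpr ⟨hlN.2, List.mem_toFinset.not.mpr hil⟩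
    rw [List.toFinset_cons, sdiff_insert, ← erase_sdiff_comm]
    by_cases hiT : i ∈ T
    · have hmeet : insert i l.toFinset ∩ T ≠ ∅ :=
        ne_empty_of_mem (mem_inter.mpr ⟨mem_insert_self i _, hiT⟩)
      have := (restrict1_scaledDirac_of_mem (N := N) (τ := τ) hiT).restrictL l hl hlN'
      rw [restrictL_zero] at this
      rw [if_neg hmeet]
      exact this
    · have hτ' : IsPartition ((N.erase i) \ T) (partRemove τ {i}) := by
        rw [erase_sdiff_comm, ← sdiff_singleton_eq_erase]
        exact hτ.partRemove {i}
      have := ((restrict1_scaledDirac_of_notMem hT hτ hlN.1 hiT).restrictL l hl hlN').trans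
        (ih hl hlN' (subset_erase.mpr ⟨hT, hiT⟩) hτ')
      rw [partRemove_partRemove, ← insert_eq] at this
      rw [insert_inter_of_notMem hiT]
      exact this

end ScaledDirac

end TUX

open TUX in
/-- Restriction of scaled Dirac games. -/
theorem restrict_scaledDirac (N : Finset ℕ) (T : Finset ℕ) (τ : Finset (Finset ℕ))
    (hT : T ⊆ N) (hτ : IsPartition (N \ T) τ) (S : Finset ℕ) (hS : S ⊆ N) :
    ∀ R ⊆ N \ S, ∀ ρ, IsPartition ((N \ S) \ R) ρ →
      (if S ∩ T = ∅ then
          restrictSet N (scaledDirac N T τ) S R ρ = scaledDirac (N \ S) T (partRemove τ S) R ρ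
        else
          restrictSet N (scaledDirac N T τ) S R ρ = 0) := by
  intro R hR ρ hρ
  have h := restrictL_scaledDirac (S.sort (· ≤ ·)) (sort_nodup _ _)
    (by rwa [sort_toFinset]) hT hτ
  rw [sort_toFinset] at h
  split_ifs at h ⊢ <;> exact h R hR ρ hρ
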